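/- The group G' acts on the set of all functions f : {T'_1,T'_2,T'_3,T'_4,T_5,T_6,T_7,T_8} → {1,3} by (σ·f)(v) = f(σ⁻¹·v). This action has exactly 30 orbits. (These are the c-degree assignments for FB𝒪 of the paper up to isomorphism.) -/
import Mathlib

set_option maxRecDepth 10000
set_option maxHeartbeats 2000000

open Matrix

/-- `τ = (2√2+1)/7`. -/
noncomputable def tau : ℝ := (2 * Real.sqrt 2 + 1) / 7

/-- The eight points `T'_1, T'_2, T'_3, T'_4, T_5, T_6, T_7, T_8` of the
pseudo-deltoidal icositetrahedron (indexed by `Fin 8`). -/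
noncomputable def P8 : Fin 8 → Fin 3 → ℝ :=
  ![tau • ![Real.sqrt 2, 0, 1], tau • ![0, Real.sqrt 2, 1],
    tau • ![-Real.sqrt 2, 0, 1], tau • ![0, -Real.sqrt 2, 1],
    tau • ![1, 1, -1], tau • ![-1, 1, -1], tau • ![-1, -1, -1], tau • ![1, -1, -1]]

/-- The matrix `σ'₂` with rows `(1/√2, 1/√2, 0), (−1/√2, 1/√2, 0), (0, 0, −1)`. -/
noncomputable def sigma2' : Matrix (Fin 3) (Fin 3) ℝ :=
  !![1 / Real.sqrt 2, 1 / Real.sqrt 2, 0;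
     -(1 / Real.sqrt 2), 1 / Real.sqrt 2, 0;
     0, 0, -1]

/-- The matrix `σ' = diag(1, −1, 1)`. -/
def sigma' : Matrix (Fin 3) (Fin 3) ℝ := !![1, 0, 0; 0, -1, 0; 0, 0, 1]

/-- `G'`: the subgroup of `GL(3,ℝ)` generated by `σ'₂` and `σ'`. -/
noncomputable def G' : Subgroup (GL (Fin 3) ℝ) :=
  Subgroup.closure {g | (↑g : Matrix (Fin 3) (Fin 3) ℝ) = sigma2' ∨
    (↑g : Matrix (Fin 3) (Fin 3) ℝ) = sigma'}

/-- Functions `f : {T'_1,…,T'_4,T_5,…,T_8} → {1,3}` (points indexed by `Fin 8`). -/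
def DegAssign : Type := {f : Fin 8 → ℕ // ∀ i, f i = 1 ∨ f i = 3}

/-- `g` is obtained from `f` by the action of some `σ ∈ G'`:
`(σ·f)(v) = f(σ⁻¹·v)`, i.e. `g(w) = f(v)` whenever `σ·v = w`. -/
noncomputable def degRel (f g : DegAssign) : Prop :=
  ∃ u ∈ G', ∀ i j : Fin 8,
    (↑u : Matrix (Fin 3) (Fin 3) ℝ).mulVec (P8 i) = P8 j → g.1 j = f.1 i

/-! ### Combinatorial layer: the dihedral permutation group on `Fin 8` -/

def cF : Fin 8 → Fin 8 := ![7,4,5,6,0,1,2,3]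
def sF : Fin 8 → Fin 8 := ![0,3,2,1,7,6,5,4]
def cpow : ℕ → (Fin 8 → Fin 8)
  | 0 => id
  | n+1 => cF ∘ cpow n
def L : List (Fin 8 → Fin 8) :=
  (List.range 8).map cpow ++ (List.range 8).map (fun k => cpow k ∘ sF)

lemma cpow0_mem : cpow 0 ∈ L :=
  List.mem_append_left _ (List.mem_map.2 ⟨0, List.mem_range.2 (by norm_num), rfl⟩)
lemma cpow1_mem : cpow 1 ∈ L :=
  List.mem_append_left _ (List.mem_map.2 ⟨1, List.mem_range.2 (by norm_num), rfl⟩)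
lemma sF_mem' : cpow 0 ∘ sF ∈ L :=
  List.mem_append_right _ (List.mem_map.2 ⟨0, List.mem_range.2 (by norm_num), rfl⟩)

lemma L_comp_b : (L.all fun p => L.all fun q => L.any fun m =>
    (List.finRange 8).all fun i => m i == p (q i)) = true := by decide

lemma L_inv_b : (L.all fun p => L.any fun q =>
    (List.finRange 8).all fun i => (q (p i) == i) && (p (q i) == i)) = true := by decide

lemma L_comp' : ∀ p ∈ L, ∀ q ∈ L, ∃ m ∈ L, ∀ i, m i = p (q i) := by
  have h := L_comp_b
  simp only [List.all_eq_true, List.any_eq_true, beq_iff_eq] at h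
  intro p hp q hq
  obtain ⟨m, hm, h'⟩ := h p hp q hq
  exact ⟨m, hm, fun i => h' i (List.mem_finRange i)⟩

lemma L_inv' : ∀ p ∈ L, ∃ q ∈ L, (∀ i, q (p i) = i) ∧ (∀ i, p (q i) = i) := by
  have h := L_inv_b
  simp only [List.all_eq_true, List.any_eq_true, Bool.and_eq_true, beq_iff_eq] at h
  intro p hp
  obtain ⟨q, hq, h'⟩ := h p hp
  exact ⟨q, hq, fun i => (h' i (List.mem_finRange i)).1, fun i => (h' i (List.mem_finRange i)).2⟩

/-- The relation on two-colourings of `Fin 8` induced by the permutations in `L`. -/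
def r' (a b : Fin 8 → Bool) : Prop := ∃ p ∈ L, ∀ i, b (p i) = a i

def bn (b : Bool) : ℕ := cond b 1 0

def enc (a : Fin 8 → Bool) : ℕ :=
  bn (a 0) + 2 * bn (a 1) + 4 * bn (a 2) + 8 * bn (a 3) + 16 * bn (a 4) +
    32 * bn (a 5) + 64 * bn (a 6) + 128 * bn (a 7)

def dec (n : ℕ) : Fin 8 → Bool := fun i => n.testBit i

lemma dec_enc : ∀ a : Fin 8 → Bool, dec (enc a) = a := by decide

lemma enc_lt : ∀ a : Fin 8 → Bool, enc a < 256 := by decide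

lemma enc_inj {a b : Fin 8 → Bool} (h : enc a = enc b) : a = b := by
  rw [← dec_enc a, h, dec_enc]

/-- The (finite set of codes of) the orbit of a colouring under `L`. -/
def OF (a : Fin 8 → Bool) : Finset ℕ := (L.map (fun q => enc (a ∘ q))).toFinset

lemma mem_OF {a : Fin 8 → Bool} {x : ℕ} :
    x ∈ OF a ↔ ∃ q ∈ L, enc (a ∘ q) = x := by
  show x ∈ (L.map _).toFinset ↔ _
  rw [List.mem_toFinset, List.mem_map]

lemma OF_nonempty (a : Fin 8 → Bool) : (OF a).Nonempty :=
  ⟨enc (a ∘ cpow 0), mem_OF.2 ⟨cpow 0, cpow0_mem, rfl⟩⟩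

/-- Canonical code of the orbit of a colouring. -/
def canon (a : Fin 8 → Bool) : ℕ := (OF a).min' (OF_nonempty a)

lemma min'_congr {s t : Finset ℕ} (h : s = t) (hs : s.Nonempty) (ht : t.Nonempty) :
    s.min' hs = t.min' ht := by subst h; rfl

lemma OF_eq_of_r' {a b : Fin 8 → Bool} (h : r' a b) : OF a = OF b := by
  obtain ⟨p, hp, hab⟩ := h
  obtain ⟨p', hp', hpp', hp'p⟩ := L_inv' p hp
  have hba : ∀ j, b j = a (p' j) := fun j => by
    conv_lhs => rw [← hp'p j]
    rw [hab (p' j)]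
  ext x
  rw [mem_OF, mem_OF]
  constructor
  · rintro ⟨q, hq, rfl⟩
    obtain ⟨m, hm, hmeq⟩ := L_comp' p hp q hq
    exact ⟨m, hm, congrArg enc (funext fun i => by
      simp only [Function.comp_apply]
      rw [hmeq i, hab (q i)])⟩
  · rintro ⟨q, hq, rfl⟩
    obtain ⟨m, hm, hmeq⟩ := L_comp' p' hp' q hq
    exact ⟨m, hm, congrArg enc (funext fun i => by
      simp only [Function.comp_apply]
      rw [hmeq i, ← hba (q i)])⟩

lemma canon_eq_of_r' {a b : Fin 8 → Bool} (h : r' a b) : canon a = canon b :=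
  min'_congr (OF_eq_of_r' h) _ _

lemma r'_of_canon_eq {a b : Fin 8 → Bool} (h : canon a = canon b) : r' a b := by
  obtain ⟨q, hq, hqa⟩ := mem_OF.1 (Finset.min'_mem (OF a) (OF_nonempty a))
  obtain ⟨t, ht, htb⟩ := mem_OF.1 (Finset.min'_mem (OF b) (OF_nonempty b))
  have hab : a ∘ q = b ∘ t := enc_inj (by rw [hqa, htb]; exact h)
  obtain ⟨q', hq', hqq', hq'q⟩ := L_inv' q hq
  obtain ⟨m, hm, hmeq⟩ := L_comp' t ht q' hq'
  refine ⟨m, hm, fun i => ?_⟩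
  have h1 := congrFun hab (q' i)
  simp only [Function.comp_apply] at h1
  rw [hmeq i, ← h1, hq'q i]

lemma r'_refl (a : Fin 8 → Bool) : r' a a := ⟨cpow 0, cpow0_mem, fun _ => rfl⟩

/-- The set of canonical codes. -/
def S : Finset ℕ := ((List.range 256).map fun n => canon (dec n)).toFinset

lemma S_card : S.card = 30 := by decide

lemma canon_mem_S (a : Fin 8 → Bool) : canon a ∈ S :=
  List.mem_toFinset.2 (List.mem_map.2 ⟨enc a, List.mem_range.2 (enc_lt a),
    by rw [dec_enc]⟩)

lemma mem_S_elim {x : ℕ} (hx : x ∈ S) : ∃ n, canon (dec n) = x := by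
  obtain ⟨n, _, h⟩ := List.mem_map.1 (List.mem_toFinset.1 hx)
  exact ⟨n, h⟩

attribute [irreducible] canon S OF enc dec

/-! ### Geometric layer -/

lemma hs2 : Real.sqrt 2 * Real.sqrt 2 = 2 := Real.mul_self_sqrt (by norm_num)
lemma hs0 : Real.sqrt 2 ≠ 0 := by positivity
lemma htsq : tau * Real.sqrt 2 ^ 2 = tau * 2 := by
  rw [Real.sq_sqrt (by norm_num : (0:ℝ) ≤ 2)]

noncomputable def sigma2inv : Matrix (Fin 3) (Fin 3) ℝ :=
  !![1 / Real.sqrt 2, -(1 / Real.sqrt 2), 0;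
     1 / Real.sqrt 2, 1 / Real.sqrt 2, 0;
     0, 0, -1]

lemma sigma2'_mul_inv : sigma2' * sigma2inv = 1 := by
  ext i j
  fin_cases i <;> fin_cases j <;>
    simp [sigma2', sigma2inv, Matrix.mul_apply, Fin.sum_univ_three, Matrix.one_apply] <;>
    field_simp <;> nlinarith [hs2]

lemma inv_mul_sigma2' : sigma2inv * sigma2' = 1 := by
  ext i j
  fin_cases i <;> fin_cases j <;>
    simp [sigma2', sigma2inv, Matrix.mul_apply, Fin.sum_univ_three, Matrix.one_apply] <;>
    field_simp <;> nlinarith [hs2]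

lemma sigma'_mul_self : sigma' * sigma' = 1 := by
  ext i j
  fin_cases i <;> fin_cases j <;>
    simp [sigma', Matrix.mul_apply, Fin.sum_univ_three, Matrix.one_apply,
      Matrix.vecHead, Matrix.vecTail]

noncomputable def u2 : GL (Fin 3) ℝ := ⟨sigma2', sigma2inv, sigma2'_mul_inv, inv_mul_sigma2'⟩
noncomputable def us : GL (Fin 3) ℝ := ⟨sigma', sigma', sigma'_mul_self, sigma'_mul_self⟩

lemma u2_mem : u2 ∈ G' := Subgroup.subset_closure (Or.inl rfl)
lemma us_mem : us ∈ G' := Subgroup.subset_closure (Or.inr rfl)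

/-- `u` acts on the eight points as the permutation `p`. -/
def Realizes (u : GL (Fin 3) ℝ) (p : Fin 8 → Fin 8) : Prop :=
  ∀ i, (↑u : Matrix (Fin 3) (Fin 3) ℝ).mulVec (P8 i) = P8 (p i)

lemma realizes_one : Realizes 1 id := fun i => by
  simp [Matrix.one_mulVec]

lemma realizes_mul {u v : GL (Fin 3) ℝ} {p q : Fin 8 → Fin 8}
    (hu : Realizes u p) (hv : Realizes v q) : Realizes (u * v) (p ∘ q) := fun i => by
  rw [Units.val_mul, ← Matrix.mulVec_mulVec, hv i]
  exact hu (q i)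

lemma realizes_inv {u : GL (Fin 3) ℝ} {p q : Fin 8 → Fin 8}
    (hu : Realizes u p) (h2 : ∀ i, p (q i) = i) :
    Realizes u⁻¹ q := fun j => by
  have h3 : (↑u : Matrix (Fin 3) (Fin 3) ℝ).mulVec (P8 (q j)) = P8 j := by
    rw [hu (q j), h2 j]
  rw [← h3, Matrix.mulVec_mulVec, Units.inv_mul, Matrix.one_mulVec]

lemma realizes_congr {u : GL (Fin 3) ℝ} {p q : Fin 8 → Fin 8}
    (hu : Realizes u p) (h : ∀ i, q i = p i) : Realizes u q := fun i => by
  rw [h i]; exact hu i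

lemma realizes_of_matrix_eq {u v : GL (Fin 3) ℝ} {p : Fin 8 → Fin 8}
    (h : (↑u : Matrix (Fin 3) (Fin 3) ℝ) = (↑v : Matrix (Fin 3) (Fin 3) ℝ))
    (hv : Realizes v p) : Realizes u p := fun i => by rw [h]; exact hv i

lemma realizes_u2 : Realizes u2 cF := by
  intro i
  fin_cases i
  · show (sigma2').mulVec (tau • ![Real.sqrt 2, 0, 1]) = tau • ![1, -1, -1]
    funext k
    fin_cases k <;>
      simp [sigma2', Matrix.mulVec, dotProduct, Fin.sum_univ_three] <;>
      field_simp <;> ring_nf <;> nlinarith [hs2, hs0, htsq, Real.sq_sqrt (by norm_num : (0:ℝ) <= 2)]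
  · show (sigma2').mulVec (tau • ![0, Real.sqrt 2, 1]) = tau • ![1, 1, -1]
    funext k
    fin_cases k <;>
      simp [sigma2', Matrix.mulVec, dotProduct, Fin.sum_univ_three] <;>
      field_simp <;> ring_nf <;> nlinarith [hs2, hs0, htsq, Real.sq_sqrt (by norm_num : (0:ℝ) <= 2)]
  · show (sigma2').mulVec (tau • ![-Real.sqrt 2, 0, 1]) = tau • ![-1, 1, -1]
    funext k
    fin_cases k <;>
      simp [sigma2', Matrix.mulVec, dotProduct, Fin.sum_univ_three] <;>
      field_simp <;> ring_nf <;> nlinarith [hs2, hs0, htsq, Real.sq_sqrt (by norm_num : (0:ℝ) <= 2)]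
  · show (sigma2').mulVec (tau • ![0, -Real.sqrt 2, 1]) = tau • ![-1, -1, -1]
    funext k
    fin_cases k <;>
      simp [sigma2', Matrix.mulVec, dotProduct, Fin.sum_univ_three] <;>
      field_simp <;> ring_nf <;> nlinarith [hs2, hs0, htsq, Real.sq_sqrt (by norm_num : (0:ℝ) <= 2)]
  · show (sigma2').mulVec (tau • ![1, 1, -1]) = tau • ![Real.sqrt 2, 0, 1]
    funext k
    fin_cases k <;>
      simp [sigma2', Matrix.mulVec, dotProduct, Fin.sum_univ_three] <;>
      field_simp <;> ring_nf <;> nlinarith [hs2, hs0, htsq, Real.sq_sqrt (by norm_num : (0:ℝ) <= 2)]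
  · show (sigma2').mulVec (tau • ![-1, 1, -1]) = tau • ![0, Real.sqrt 2, 1]
    funext k
    fin_cases k <;>
      simp [sigma2', Matrix.mulVec, dotProduct, Fin.sum_univ_three] <;>
      field_simp <;> ring_nf <;> nlinarith [hs2, hs0, htsq, Real.sq_sqrt (by norm_num : (0:ℝ) <= 2)]
  · show (sigma2').mulVec (tau • ![-1, -1, -1]) = tau • ![-Real.sqrt 2, 0, 1]
    funext k
    fin_cases k <;>
      simp [sigma2', Matrix.mulVec, dotProduct, Fin.sum_univ_three] <;>
      field_simp <;> ring_nf <;> nlinarith [hs2, hs0, htsq, Real.sq_sqrt (by norm_num : (0:ℝ) <= 2)]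
  · show (sigma2').mulVec (tau • ![1, -1, -1]) = tau • ![0, -Real.sqrt 2, 1]
    funext k
    fin_cases k <;>
      simp [sigma2', Matrix.mulVec, dotProduct, Fin.sum_univ_three] <;>
      field_simp <;> ring_nf <;> nlinarith [hs2, hs0, htsq, Real.sq_sqrt (by norm_num : (0:ℝ) <= 2)]

lemma realizes_us : Realizes us sF := by
  intro i
  fin_cases i
  · show (sigma').mulVec (tau • ![Real.sqrt 2, 0, 1]) = tau • ![Real.sqrt 2, 0, 1]
    funext k
    fin_cases k <;>
      simp [sigma', Matrix.mulVec, dotProduct, Fin.sum_univ_three] <;>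
      field_simp <;> ring_nf <;> nlinarith [hs2, hs0, htsq, Real.sq_sqrt (by norm_num : (0:ℝ) <= 2)]
  · show (sigma').mulVec (tau • ![0, Real.sqrt 2, 1]) = tau • ![0, -Real.sqrt 2, 1]
    funext k
    fin_cases k <;>
      simp [sigma', Matrix.mulVec, dotProduct, Fin.sum_univ_three] <;>
      field_simp <;> ring_nf <;> nlinarith [hs2, hs0, htsq, Real.sq_sqrt (by norm_num : (0:ℝ) <= 2)]
  · show (sigma').mulVec (tau • ![-Real.sqrt 2, 0, 1]) = tau • ![-Real.sqrt 2, 0, 1]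
    funext k
    fin_cases k <;>
      simp [sigma', Matrix.mulVec, dotProduct, Fin.sum_univ_three] <;>
      field_simp <;> ring_nf <;> nlinarith [hs2, hs0, htsq, Real.sq_sqrt (by norm_num : (0:ℝ) <= 2)]
  · show (sigma').mulVec (tau • ![0, -Real.sqrt 2, 1]) = tau • ![0, Real.sqrt 2, 1]
    funext k
    fin_cases k <;>
      simp [sigma', Matrix.mulVec, dotProduct, Fin.sum_univ_three] <;>
      field_simp <;> ring_nf <;> nlinarith [hs2, hs0, htsq, Real.sq_sqrt (by norm_num : (0:ℝ) <= 2)]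
  · show (sigma').mulVec (tau • ![1, 1, -1]) = tau • ![1, -1, -1]
    funext k
    fin_cases k <;>
      simp [sigma', Matrix.mulVec, dotProduct, Fin.sum_univ_three] <;>
      field_simp <;> ring_nf <;> nlinarith [hs2, hs0, htsq, Real.sq_sqrt (by norm_num : (0:ℝ) <= 2)]
  · show (sigma').mulVec (tau • ![-1, 1, -1]) = tau • ![-1, -1, -1]
    funext k
    fin_cases k <;>
      simp [sigma', Matrix.mulVec, dotProduct, Fin.sum_univ_three] <;>
      field_simp <;> ring_nf <;> nlinarith [hs2, hs0, htsq, Real.sq_sqrt (by norm_num : (0:ℝ) <= 2)]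
  · show (sigma').mulVec (tau • ![-1, -1, -1]) = tau • ![-1, 1, -1]
    funext k
    fin_cases k <;>
      simp [sigma', Matrix.mulVec, dotProduct, Fin.sum_univ_three] <;>
      field_simp <;> ring_nf <;> nlinarith [hs2, hs0, htsq, Real.sq_sqrt (by norm_num : (0:ℝ) <= 2)]
  · show (sigma').mulVec (tau • ![1, -1, -1]) = tau • ![1, 1, -1]
    funext k
    fin_cases k <;>
      simp [sigma', Matrix.mulVec, dotProduct, Fin.sum_univ_three] <;>
      field_simp <;> ring_nf <;> nlinarith [hs2, hs0, htsq, Real.sq_sqrt (by norm_num : (0:ℝ) <= 2)]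

lemma realizes_cpow : ∀ k : ℕ, Realizes (u2 ^ k) (cpow k) := by
  intro k
  induction k with
  | zero => exact realizes_one
  | succ n ih =>
    rw [pow_succ']
    exact realizes_mul realizes_u2 ih

lemma realize_of_mem_L : ∀ p ∈ L, ∃ u ∈ G', Realizes u p := by
  intro p hp
  rcases List.mem_append.1 hp with h | h
  · obtain ⟨k, _, rfl⟩ := List.mem_map.1 h
    exact ⟨u2 ^ k, pow_mem u2_mem k, realizes_cpow k⟩
  · obtain ⟨k, _, rfl⟩ := List.mem_map.1 h
    exact ⟨u2 ^ k * us, mul_mem (pow_mem u2_mem k) us_mem,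
      realizes_mul (realizes_cpow k) realizes_us⟩

lemma exists_perm_of_mem : ∀ u ∈ G', ∃ p ∈ L, Realizes u p := by
  intro u hu
  induction hu using Subgroup.closure_induction with
  | mem x hx =>
    rcases hx with h | h
    · exact ⟨cpow 1, cpow1_mem,
        realizes_congr (realizes_of_matrix_eq h realizes_u2) (fun _ => rfl)⟩
    · exact ⟨cpow 0 ∘ sF, sF_mem',
        realizes_congr (realizes_of_matrix_eq h realizes_us) (fun _ => rfl)⟩
  | one => exact ⟨cpow 0, cpow0_mem, fun i => by simp [Matrix.one_mulVec, cpow]⟩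
  | mul x y _ _ ihx ihy =>
    obtain ⟨p, hp, hxp⟩ := ihx
    obtain ⟨q, hq, hyq⟩ := ihy
    obtain ⟨m, hm, hmeq⟩ := L_comp' p hp q hq
    exact ⟨m, hm, realizes_congr (realizes_mul hxp hyq) hmeq⟩
  | inv x _ ih =>
    obtain ⟨p, hp, hxp⟩ := ih
    obtain ⟨q, hq, _, h2⟩ := L_inv' p hp
    exact ⟨q, hq, realizes_inv hxp h2⟩

lemma P8_0 : P8 0 = tau • ![Real.sqrt 2, 0, 1] := rfl
lemma P8_1 : P8 1 = tau • ![0, Real.sqrt 2, 1] := rfl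
lemma P8_2 : P8 2 = tau • ![-Real.sqrt 2, 0, 1] := rfl
lemma P8_3 : P8 3 = tau • ![0, -Real.sqrt 2, 1] := rfl
lemma P8_4 : P8 4 = tau • ![1, 1, -1] := rfl
lemma P8_5 : P8 5 = tau • ![-1, 1, -1] := rfl
lemma P8_6 : P8 6 = tau • ![-1, -1, -1] := rfl
lemma P8_7 : P8 7 = tau • ![1, -1, -1] := rfl

lemma P8_inj : Function.Injective P8 := by
  have ht : (0:ℝ) < tau := by unfold tau; positivity
  have hst : (0:ℝ) < tau * Real.sqrt 2 := by
    have : (0:ℝ) < Real.sqrt 2 := by positivity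
    positivity
  intro i j h
  have h0 := congrFun h 0
  have h1 := congrFun h 1
  have h2 := congrFun h 2
  fin_cases i <;> fin_cases j <;> first
  | rfl
  | (exfalso
     simp [P8_0, P8_1, P8_2, P8_3, P8_4, P8_5, P8_6, P8_7] at h0 h1 h2
     linarith [ht, hst])

/-! ### Linking the two layers -/

noncomputable def eDA : DegAssign ≃ (Fin 8 → Bool) where
  toFun f := fun i => decide (f.1 i = 3)
  invFun g := ⟨fun i => if g i then 3 else 1, fun i => by by_cases h : g i <;> simp [h]⟩
  left_inv f := Subtype.ext (funext fun i => by rcases f.2 i with h | h <;> simp [h])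
  right_inv g := funext fun i => by by_cases h : g i <;> simp [h]

lemma key : ∀ f g : DegAssign, degRel f g ↔ r' (eDA f) (eDA g) := by
  intro f g
  constructor
  · rintro ⟨u, huG, H⟩
    obtain ⟨p, hpL, hre⟩ := exists_perm_of_mem u huG
    refine ⟨p, hpL, fun i => ?_⟩
    have hv : g.1 (p i) = f.1 i := H i (p i) (hre i)
    show decide (g.1 (p i) = 3) = decide (f.1 i = 3)
    rw [hv]
  · rintro ⟨p, hpL, h⟩
    obtain ⟨u, huG, hre⟩ := realize_of_mem_L p hpL
    refine ⟨u, huG, fun i j hij => ?_⟩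
    have hj : p i = j := P8_inj ((hre i).symm.trans hij)
    subst hj
    have hb : decide (g.1 (p i) = 3) = decide (f.1 i = 3) := h i
    rcases f.2 i with hf | hf <;> rcases g.2 (p i) with hg | hg <;>
      simp only [hf, hg] at hb ⊢ <;> first | rfl | simp at hb

/-! ### Conclusion -/

noncomputable def Fc : Quot r' → {x // x ∈ S} :=
  Quot.lift (fun a => ⟨canon a, canon_mem_S a⟩)
    (fun a b hab => Subtype.ext (canon_eq_of_r' hab))

lemma Fc_mk (a : Fin 8 → Bool) : Fc (Quot.mk r' a) = ⟨canon a, canon_mem_S a⟩ := rfl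

lemma Fc_bij : Function.Bijective Fc := by
  constructor
  · intro x y
    refine Quot.induction_on₂ x y ?_
    intro a b hab
    rw [Fc_mk, Fc_mk] at hab
    exact Quot.sound (r'_of_canon_eq (Subtype.ext_iff.1 hab))
  · rintro ⟨x, hx⟩
    obtain ⟨n, hn⟩ := mem_S_elim hx
    exact ⟨Quot.mk _ (dec n), Subtype.ext (by rw [Fc_mk]; exact hn)⟩

/-- The action of `G'` on functions `{T'_1,…,T'_4,T_5,…,T_8} → {1,3}` has exactly
`30` orbits (the `c`-degree assignments for `FB𝒪` up to isomorphism). -/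
theorem stmt_12 : Nat.card (Quot degRel) = 30 := by
  have e1 : Quot degRel ≃ Quot r' := Quot.congr eDA key
  have e2 : Quot degRel ≃ {x // x ∈ S} := e1.trans (Equiv.ofBijective Fc Fc_bij)
  rw [Nat.card_congr e2, Nat.card_eq_finsetCard, S_card]
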